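/- Let φ ∈ K(z) be a rational function of degree d ≥ 2. Then for all n ≥ 1, the height of the n-th iterate satisfies h(φⁿ) ≤ ((dⁿ−1)/(d−1))·h(φ) + d²·((d^{n−1}−1)/(d−1))·log 8. -/

import Mathlib

open Polynomial Filter

noncomputable section

attribute [local instance] Classical.propDecidable

/-- A set of nonarchimedean places on a field `K`, satisfying the product formula;
this is the structure carried by the function field of a smooth projective curve
over an algebraically closed field of characteristic `0`. -/
structure PlaceData (K : Type*) [Field K] where
  Place : Type
  absv : Place → AbsoluteValue K ℝ
  nonarch : ∀ (v : Place) (x y : K), absv v (x + y) ≤ max (absv v x) (absv v y)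
  finite_support : ∀ x : K, x ≠ 0 → {v : Place | absv v x ≠ 1}.Finite
  product_formula : ∀ x : K, x ≠ 0 → (∑ᶠ v : Place, Real.log (absv v x)) = 0

variable {K : Type*} [Field K]

/-- The (absolute logarithmic) height of an element of `K`. -/
def PlaceData.ht (M : PlaceData K) (x : K) : ℝ :=
  ∑ᶠ v : M.Place, Real.log (max (M.absv v x) 1)

/-- Points of `ℙ¹(K) = K ∪ {∞}` are modelled by `Option K`: `some x = [x:1]`, `none = ∞`. -/
def PlaceData.htP1 (M : PlaceData K) : Option K → ℝ
  | Option.some x => M.ht x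
  | Option.none => 0

/-- `max` of `av` over the coefficients of a polynomial. -/
def polyAbs (av : AbsoluteValue K ℝ) (p : K[X]) : ℝ :=
  (Finset.range (p.natDegree + 1)).sup' ⟨0, Finset.mem_range.mpr (Nat.succ_pos _)⟩ fun i => av (p.coeff i)

/-- The height of a rational function `φ = f/g` with `f, g` coprime. -/
def PlaceData.htRF (M : PlaceData K) (φ : RatFunc K) : ℝ :=
  ∑ᶠ v : M.Place, Real.log (max (polyAbs (M.absv v) φ.num) (polyAbs (M.absv v) φ.denom))

/-- The degree of a rational function. -/
def degRF (φ : RatFunc K) : ℕ := max φ.num.natDegree φ.denom.natDegree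

/-- Evaluation of a rational map `φ` on `ℙ¹(K) = K ∪ {∞}`. -/
def evalP1 (φ : RatFunc K) : Option K → Option K
  | Option.some a =>
      if φ.denom.eval a = 0 then Option.none
      else Option.some (φ.num.eval a / φ.denom.eval a)
  | Option.none =>
      if φ.denom.natDegree < φ.num.natDegree then Option.none
      else Option.some (φ.num.coeff φ.denom.natDegree / φ.denom.leadingCoeff)

/-- Composition of rational functions. -/
def RFcomp (φ ψ : RatFunc K) : RatFunc K :=
  φ.num.eval₂ (algebraMap K (RatFunc K)) ψ / φ.denom.eval₂ (algebraMap K (RatFunc K)) ψ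

/-- The `n`-fold iterate `φⁿ = φ ∘ ⋯ ∘ φ` as a rational function. -/
def RFiter (φ : RatFunc K) : ℕ → RatFunc K
  | 0 => RatFunc.X
  | n + 1 => RFcomp φ (RFiter φ n)

/-- The canonical height `ĥ_φ(P) = lim_n h(φⁿ(P))/dⁿ`. -/
def canHt (M : PlaceData K) (φ : RatFunc K) (P : Option K) : ℝ :=
  limUnder atTop fun n : ℕ => M.htP1 ((evalP1 φ)^[n] P) / (degRF φ : ℝ) ^ n

/-- `P ∈ ℙ¹(K)` is preperiodic for `φ` if its forward orbit is finite. -/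
def P1Preperiodic (φ : RatFunc K) (P : Option K) : Prop :=
  (Set.range fun n : ℕ => (evalP1 φ)^[n] P).Finite

/-- Base change of a rational function along a field embedding. -/
def mapRF {L : Type*} [Field L] (f : K →+* L) (φ : RatFunc K) : RatFunc L :=
  algebraMap L[X] (RatFunc L) (φ.num.map f) / algebraMap L[X] (RatFunc L) (φ.denom.map f)

/-- Base change of a point of `ℙ¹`. -/
def mapP1 {L : Type*} [Field L] (f : K →+* L) : Option K → Option L :=
  Option.map fun x => f x

/-- `φ ∈ K(z)` is isotrivial if some Möbius conjugate `M⁻¹ ∘ φ ∘ M`, with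
`M ∈ PGL₂(K̄)`, has all coefficients in the field of constants `k`. -/
def IsIsotrivial (k : Type*) [Field k] [Algebra k K] (φ : RatFunc K) : Prop :=
  ∃ a b c d : AlgebraicClosure K, a * d - b * c ≠ 0 ∧
    ∃ ψ : RatFunc (AlgebraicClosure K),
      ψ = RFcomp
            ((RatFunc.C d * RatFunc.X - RatFunc.C b) /
              (-(RatFunc.C c) * RatFunc.X + RatFunc.C a))
            (RFcomp (mapRF (algebraMap K (AlgebraicClosure K)) φ)
              ((RatFunc.C a * RatFunc.X + RatFunc.C b) /
                (RatFunc.C c * RatFunc.X + RatFunc.C d))) ∧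
      (∀ i, ψ.num.coeff i ∈
        Set.range ((algebraMap K (AlgebraicClosure K)).comp (algebraMap k K))) ∧
      (∀ i, ψ.denom.coeff i ∈
        Set.range ((algebraMap K (AlgebraicClosure K)).comp (algebraMap k K)))

/-- `Q ∈ ℙ¹(K)` is exceptional for `φ` if its total backward orbit in `ℙ¹(K̄)` is finite. -/
def IsExceptional (φ : RatFunc K) (Q : Option K) : Prop :=
  {P : Option (AlgebraicClosure K) | ∃ m : ℕ, 1 ≤ m ∧
    (evalP1 (mapRF (algebraMap K (AlgebraicClosure K)) φ))^[m] P
      = mapP1 (algebraMap K (AlgebraicClosure K)) Q}.Finite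

/-- The chordal metric `ρ_v` on `ℙ¹`, relative to an absolute value. -/
def chordalDist (av : AbsoluteValue K ℝ) : Option K → Option K → ℝ
  | Option.some x, Option.some y => av (x - y) / (max (av x) 1 * max (av y) 1)
  | Option.some x, Option.none => 1 / max (av x) 1
  | Option.none, Option.some y => 1 / max (av y) 1
  | Option.none, Option.none => 0

/-- The logarithmic chordal metric `λ_v = - log ρ_v`. -/
def lamv (av : AbsoluteValue K ℝ) (P Q : Option K) : ℝ := - Real.log (chordalDist av P Q)

/-- The ring of `S`-integers `R_S = {x ∈ K : |x|_v ≤ 1 for all v ∉ S}`. -/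
def SInt (M : PlaceData K) (S : Finset M.Place) : Set K :=
  {x : K | ∀ v : M.Place, v ∉ S → M.absv v x ≤ 1}

/-- The group of `S`-units `R_S^* = {x ∈ K : x ≠ 0, |x|_v = 1 for all v ∉ S}`. -/
def SUnit (M : PlaceData K) (S : Finset M.Place) : Set K :=
  {x : K | x ≠ 0 ∧ ∀ v : M.Place, v ∉ S → M.absv v x = 1}

/-- Ramification index of `f` at a finite point `a` with `f(a)` finite,
`e_a(f) = ord_a (f(z) - f(a))`; if `f(a) = ∞` it is the order of the pole. -/
def ramIndexFin (f : RatFunc K) (a : K) : ℕ :=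
  if f.denom.eval a = 0 then f.denom.rootMultiplicity a
  else ((f - RatFunc.C (f.num.eval a / f.denom.eval a)).num).rootMultiplicity a

/-- Ramification index `e_P(f)` of `f` at `P ∈ ℙ¹(K)`; the point `∞` is handled by
conjugating with the Möbius transformation `z ↦ 1/z`. -/
def ramIndex (f : RatFunc K) : Option K → ℕ
  | Option.some a => ramIndexFin f a
  | Option.none => ramIndexFin (RFcomp f (1 / RatFunc.X)) 0

/-- `log_d⁺ t = max (log t / log d) 0`. -/
def logdPlus (d : ℕ) (t : ℝ) : ℝ := max (Real.log t / Real.log d) 0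

/-- `inf {ĥ_φ(Q) : Q ∈ ℙ¹(K), ĥ_φ(Q) > 0}`. -/
def infposCanHt (M : PlaceData K) (φ : RatFunc K) : ℝ :=
  sInf {t : ℝ | 0 < t ∧ ∃ Q : Option K, canHt M φ Q = t}

/-- `K` is an (algebraic) function field in one variable over `k`. -/
def IsFunctionFieldOver (k K : Type*) [Field k] [Field K] [Algebra k K] : Prop :=
  ∃ t : K, Transcendental k t ∧
    FiniteDimensional (IntermediateField.adjoin k ({t} : Set K)) K

/-! At every place `v` the Gauss norm `|·|_v` of polynomials is multiplicative (Gauss's lemma),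
since `v` is nonarchimedean. Writing `φ = f/g`, `ψ = p/q` and `d = deg φ`, the composition `φ ∘ ψ`
is the quotient of `q^d f(p/q)` and `q^d g(p/q)`, whose Gauss norms are at most
`max(|f|_v, |g|_v) · max(|p|_v, |q|_v)^d` by the ultrametric inequality. Bringing this quotient to
lowest terms divides both by a common factor `c`, and `∑_v log |c|_v ≥ 0` by the product formula
applied to the leading coefficient of `c`. Hence `h(φ ∘ ψ) ≤ h(φ) + d·h(ψ)`, and by induction
`h(φⁿ) ≤ (1 + d + ⋯ + d^(n-1))·h(φ)`; the `log 8` term is nonnegative. -/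

theorem Function.HasFiniteMulSupport.log {α : Type*} {f : α → ℝ} (hf : HasFiniteMulSupport f) :
    HasFiniteSupport fun a => Real.log (f a) :=
  hf.subset fun a ha h => ha (by simp [h])

theorem RatFunc.exists_num_mul_eq_and_denom_mul_eq {x : RatFunc K} {N D : K[X]} (hD : D ≠ 0)
    (hx : x = algebraMap K[X] (RatFunc K) N / algebraMap K[X] (RatFunc K) D) :
    ∃ c : K[X], x.num * c = N ∧ x.denom * c = D := by
  have hcross := (RatFunc.num_mul_eq_mul_denom_iff hD).2 hx
  obtain ⟨c, hc⟩ : x.denom ∣ D :=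
    x.isCoprime_num_denom.symm.dvd_of_dvd_mul_left ⟨N, by rw [hcross, mul_comm]⟩
  refine ⟨c, mul_right_cancel₀ x.denom_ne_zero ?_, hc.symm⟩
  rw [← hcross, hc]
  ring

section PolyAbs

variable (av : AbsoluteValue K ℝ)

theorem coeff_le_polyAbs (p : K[X]) (i : ℕ) : av (p.coeff i) ≤ polyAbs av p := by
  rcases le_or_gt i p.natDegree with h | h
  · exact Finset.le_sup' (fun i => av (p.coeff i)) (Finset.mem_range_succ_iff.2 h)
  · rw [p.coeff_eq_zero_of_natDegree_lt h, map_zero]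
    exact (av.nonneg _).trans
      (Finset.le_sup' (fun i => av (p.coeff i)) (Finset.mem_range.2 p.natDegree.succ_pos))

theorem polyAbs_eq_gaussNorm (p : K[X]) : polyAbs av p = p.gaussNorm av 1 := by
  refine le_antisymm (Finset.sup'_le _ _ fun i _ => ?_) ?_
  · simpa using p.le_gaussNorm av zero_le_one i
  · obtain ⟨i, hi⟩ := p.exists_eq_gaussNorm av 1
    simpa [hi] using coeff_le_polyAbs av p i

theorem polyAbs_nonneg (p : K[X]) : 0 ≤ polyAbs av p :=
  (av.nonneg _).trans (coeff_le_polyAbs av p 0)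

theorem polyAbs_pos {p : K[X]} (hp : p ≠ 0) : 0 < polyAbs av p :=
  (av.pos (leadingCoeff_ne_zero.2 hp)).trans_le (coeff_le_polyAbs av p _)

theorem polyAbs_C (a : K) : polyAbs av (C a) = av a := by
  rw [polyAbs_eq_gaussNorm, gaussNorm_C]

theorem polyAbs_zero : polyAbs av (0 : K[X]) = 0 := by
  simpa using polyAbs_C av 0

theorem polyAbs_one : polyAbs av (1 : K[X]) = 1 := by
  simpa using polyAbs_C av 1

theorem polyAbs_X : polyAbs av (X : K[X]) = 1 := by
  rw [polyAbs_eq_gaussNorm, ← monomial_one_one_eq_X, gaussNorm_monomial]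
  simp

variable {av}

theorem polyAbs_mul (hna : IsNonarchimedean av) (p q : K[X]) :
    polyAbs av (p * q) = polyAbs av p * polyAbs av q := by
  simp only [polyAbs_eq_gaussNorm]
  exact gaussNorm_mul hna one_pos p q

theorem polyAbs_pow (hna : IsNonarchimedean av) (p : K[X]) (n : ℕ) :
    polyAbs av (p ^ n) = polyAbs av p ^ n := by
  induction n with
  | zero => simp [polyAbs_one]
  | succ n ih => rw [pow_succ, pow_succ, polyAbs_mul hna, ih]

theorem polyAbs_sum_range_le (hna : IsNonarchimedean av) {F : ℕ → K[X]} {n : ℕ} {B : ℝ}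
    (h : ∀ i ∈ Finset.range (n + 1), polyAbs av (F i) ≤ B) :
    polyAbs av (∑ i ∈ Finset.range (n + 1), F i) ≤ B := by
  have hna' : IsNonarchimedean (polyAbs av) := by
    simpa only [funext (polyAbs_eq_gaussNorm av)] using
      isNonarchimedean_gaussNorm av hna zero_le_one
  exact (hna'.apply_sum_le_sup Finset.nonempty_range_add_one).trans (Finset.sup'_le _ _ h)

end PolyAbs

/-- `q ^ d * h (p / q)` with the denominators cleared, when `h.natDegree ≤ d`. -/
def homogSubst (h p q : K[X]) (d : ℕ) : K[X] :=
  ∑ i ∈ Finset.range (d + 1), C (h.coeff i) * p ^ i * q ^ (d - i)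

theorem algebraMap_homogSubst {h : K[X]} {d : ℕ} (hd : h.natDegree ≤ d) (p : K[X]) {q : K[X]}
    (hq : q ≠ 0) :
    algebraMap K[X] (RatFunc K) (homogSubst h p q d) =
      h.eval₂ (algebraMap K (RatFunc K))
          (algebraMap K[X] (RatFunc K) p / algebraMap K[X] (RatFunc K) q) *
        algebraMap K[X] (RatFunc K) q ^ d := by
  rw [eval₂_eq_sum_range' _ (Nat.lt_succ_of_le hd), Finset.sum_mul, homogSubst, map_sum]
  refine Finset.sum_congr rfl fun i hi => ?_
  have hid : i ≤ d := Nat.lt_succ_iff.1 (Finset.mem_range.1 hi)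
  have hq' := RatFunc.algebraMap_ne_zero hq
  rw [map_mul, map_mul, map_pow, map_pow, RatFunc.algebraMap_C, ← RatFunc.algebraMap_eq_C,
    ← Nat.sub_add_cancel hid, pow_add, Nat.add_sub_cancel, div_pow]
  field_simp

theorem polyAbs_homogSubst_le {av : AbsoluteValue K ℝ} (hna : IsNonarchimedean av)
    (h p q : K[X]) (d : ℕ) :
    polyAbs av (homogSubst h p q d) ≤
      polyAbs av h * max (polyAbs av p) (polyAbs av q) ^ d := by
  refine polyAbs_sum_range_le hna fun i hi => ?_
  have hid : i ≤ d := Nat.lt_succ_iff.1 (Finset.mem_range.1 hi)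
  have := polyAbs_nonneg av h
  have := polyAbs_nonneg av p
  have := polyAbs_nonneg av q
  rw [polyAbs_mul hna, polyAbs_mul hna, polyAbs_C, polyAbs_pow hna, polyAbs_pow hna,
    ← Nat.add_sub_cancel' hid, pow_add, ← mul_assoc, Nat.add_sub_cancel_left]
  gcongr
  · exact coeff_le_polyAbs av h i
  · exact le_max_left _ _
  · exact le_max_right _ _

theorem log_max_polyAbs_homogSubst_le {av : AbsoluteValue K ℝ} (hna : IsNonarchimedean av)
    {f g p q : K[X]} (hg : g ≠ 0) (hq : q ≠ 0) {d : ℕ} (hD : homogSubst g p q d ≠ 0) :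
    Real.log (max (polyAbs av (homogSubst f p q d)) (polyAbs av (homogSubst g p q d))) ≤
      Real.log (max (polyAbs av f) (polyAbs av g)) +
        d * Real.log (max (polyAbs av p) (polyAbs av q)) := by
  have hfg : 0 < max (polyAbs av f) (polyAbs av g) :=
    (polyAbs_pos av hg).trans_le (le_max_right _ _)
  have hpq : 0 < max (polyAbs av p) (polyAbs av q) :=
    (polyAbs_pos av hq).trans_le (le_max_right _ _)
  rw [← Real.log_pow, ← Real.log_mul hfg.ne' (pow_pos hpq d).ne']
  refine Real.log_le_log ((polyAbs_pos av hD).trans_le (le_max_right _ _)) (max_le ?_ ?_)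
  · exact (polyAbs_homogSubst_le hna f p q d).trans (by gcongr; exact le_max_left _ _)
  · exact (polyAbs_homogSubst_le hna g p q d).trans (by gcongr; exact le_max_right _ _)

theorem RFcomp_eq_div (φ ψ : RatFunc K) :
    RFcomp φ ψ =
      algebraMap K[X] (RatFunc K) (homogSubst φ.num ψ.num ψ.denom (degRF φ)) /
        algebraMap K[X] (RatFunc K) (homogSubst φ.denom ψ.num ψ.denom (degRF φ)) := by
  rw [algebraMap_homogSubst (show φ.num.natDegree ≤ degRF φ from le_max_left _ _) _ ψ.denom_ne_zero,
    algebraMap_homogSubst (show φ.denom.natDegree ≤ degRF φ from le_max_right _ _) _ ψ.denom_ne_zero,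
    ψ.num_div_denom,
    mul_div_mul_right _ _ (pow_ne_zero _ (RatFunc.algebraMap_ne_zero ψ.denom_ne_zero))]
  rfl

namespace PlaceData

variable (M : PlaceData K)

theorem hasFiniteMulSupport_polyAbs {p : K[X]} (hp : p ≠ 0) :
    Function.HasFiniteMulSupport fun v => polyAbs (M.absv v) p := by
  refine (p.support.finite_toSet.biUnion fun i hi =>
    M.finite_support _ (mem_support_iff.1 hi)).subset fun v hv => ?_
  simp only [Set.mem_iUnion]
  by_contra! h
  apply hv
  simp only [polyAbs_eq_gaussNorm, gaussNorm, dif_pos (support_nonempty.2 hp), one_pow, mul_one]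
  rw [Finset.sup'_congr _ rfl fun i hi => not_not.1 (h i hi), Finset.sup'_const]

theorem hasFiniteSupport_log_max_polyAbs (p : K[X]) {q : K[X]} (hq : q ≠ 0) :
    Function.HasFiniteSupport fun v =>
      Real.log (max (polyAbs (M.absv v) p) (polyAbs (M.absv v) q)) := by
  rcases eq_or_ne p 0 with rfl | hp
  · simpa [polyAbs_zero, polyAbs_nonneg] using (M.hasFiniteMulSupport_polyAbs hq).log
  · exact ((M.hasFiniteMulSupport_polyAbs hp).max (M.hasFiniteMulSupport_polyAbs hq)).log

theorem finsum_log_polyAbs_nonneg {p : K[X]} (hp : p ≠ 0) :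
    0 ≤ ∑ᶠ v, Real.log (polyAbs (M.absv v) p) := by
  have hlc : p.leadingCoeff ≠ 0 := leadingCoeff_ne_zero.2 hp
  have hfin : Function.HasFiniteMulSupport fun v => M.absv v p.leadingCoeff :=
    M.finite_support _ hlc
  rw [← M.product_formula _ hlc]
  exact finsum_le_finsum' hfin.log (M.hasFiniteMulSupport_polyAbs hp).log fun v =>
    Real.log_le_log ((M.absv v).pos hlc) (coeff_le_polyAbs _ p _)

theorem htRF_nonneg (φ : RatFunc K) : 0 ≤ M.htRF φ :=
  (M.finsum_log_polyAbs_nonneg φ.denom_ne_zero).trans <|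
    finsum_le_finsum' (M.hasFiniteMulSupport_polyAbs φ.denom_ne_zero).log
      (M.hasFiniteSupport_log_max_polyAbs _ φ.denom_ne_zero) fun _ =>
        Real.log_le_log (polyAbs_pos _ φ.denom_ne_zero) (le_max_right _ _)

theorem htRF_zero : M.htRF 0 = 0 := by
  simp [htRF, polyAbs_zero, polyAbs_one]

theorem htRF_X : M.htRF RatFunc.X = 0 := by
  simp [htRF, polyAbs_X, polyAbs_one]

theorem htRF_le_of_eq_div {φ : RatFunc K} {N D : K[X]} (hD : D ≠ 0)
    (hφ : φ = algebraMap K[X] (RatFunc K) N / algebraMap K[X] (RatFunc K) D) :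
    M.htRF φ ≤ ∑ᶠ v, Real.log (max (polyAbs (M.absv v) N) (polyAbs (M.absv v) D)) := by
  obtain ⟨c, rfl, rfl⟩ := RatFunc.exists_num_mul_eq_and_denom_mul_eq hD hφ
  have hc : c ≠ 0 := right_ne_zero_of_mul hD
  have hsplit : ∀ v, Real.log (max (polyAbs (M.absv v) (φ.num * c))
      (polyAbs (M.absv v) (φ.denom * c))) =
      Real.log (max (polyAbs (M.absv v) φ.num) (polyAbs (M.absv v) φ.denom)) +
        Real.log (polyAbs (M.absv v) c) := fun v => by
    rw [polyAbs_mul (M.nonarch v), polyAbs_mul (M.nonarch v),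
      ← max_mul_of_nonneg _ _ (polyAbs_nonneg _ c),
      Real.log_mul ((polyAbs_pos _ φ.denom_ne_zero).trans_le (le_max_right _ _)).ne'
        (polyAbs_pos _ hc).ne']
  rw [finsum_congr hsplit, finsum_add_distrib (M.hasFiniteSupport_log_max_polyAbs _
    φ.denom_ne_zero) (M.hasFiniteMulSupport_polyAbs hc).log]
  exact le_add_of_nonneg_right (M.finsum_log_polyAbs_nonneg hc)

theorem htRF_RFcomp_le (φ ψ : RatFunc K) :
    M.htRF (RFcomp φ ψ) ≤ M.htRF φ + degRF φ * M.htRF ψ := by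
  have hcomp := RFcomp_eq_div φ ψ
  set D := homogSubst φ.denom ψ.num ψ.denom (degRF φ)
  rcases eq_or_ne D 0 with hD | hD
  · rw [hcomp, hD, map_zero, div_zero, htRF_zero]
    exact add_nonneg (M.htRF_nonneg φ) (mul_nonneg (Nat.cast_nonneg _) (M.htRF_nonneg ψ))
  have hφ := M.hasFiniteSupport_log_max_polyAbs φ.num φ.denom_ne_zero
  have hψ : Function.HasFiniteSupport fun v => (degRF φ : ℝ) *
      Real.log (max (polyAbs (M.absv v) ψ.num) (polyAbs (M.absv v) ψ.denom)) :=
    (M.hasFiniteSupport_log_max_polyAbs _ ψ.denom_ne_zero).mul_right _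
  refine (M.htRF_le_of_eq_div hD hcomp).trans ?_
  rw [htRF, htRF, mul_finsum, ← finsum_add_distrib hφ hψ]
  exact finsum_le_finsum' (M.hasFiniteSupport_log_max_polyAbs _ hD) (hφ.add hψ) fun v =>
    log_max_polyAbs_homogSubst_le (M.nonarch v) φ.denom_ne_zero ψ.denom_ne_zero hD

theorem htRF_RFiter_le (φ : RatFunc K) (n : ℕ) :
    M.htRF (RFiter φ n) ≤ (∑ i ∈ Finset.range n, (degRF φ : ℝ) ^ i) * M.htRF φ := by
  induction n with
  | zero => simp [RFiter, htRF_X]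
  | succ n ih =>
    calc M.htRF (RFiter φ (n + 1))
        ≤ M.htRF φ + degRF φ * M.htRF (RFiter φ n) := M.htRF_RFcomp_le φ _
      _ ≤ M.htRF φ + degRF φ * ((∑ i ∈ Finset.range n, (degRF φ : ℝ) ^ i) * M.htRF φ) := by
        gcongr
      _ = (∑ i ∈ Finset.range (n + 1), (degRF φ : ℝ) ^ i) * M.htRF φ := by
        rw [geom_sum_succ]
        ring

end PlaceData

/-- `h(φⁿ) ≤ ((dⁿ-1)/(d-1))·h(φ) + d²·((d^(n-1)-1)/(d-1))·log 8`. -/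
theorem stmt_1 {K : Type*} [Field K] (M : PlaceData K) (φ : RatFunc K)
    (d : ℕ) (hdeg : degRF φ = d) (hd : 2 ≤ d) :
    ∀ n : ℕ, 1 ≤ n →
      M.htRF (RFiter φ n) ≤
        (((d : ℝ) ^ n - 1) / ((d : ℝ) - 1)) * M.htRF φ +
          (d : ℝ) ^ 2 * (((d : ℝ) ^ (n - 1) - 1) / ((d : ℝ) - 1)) * Real.log 8 := by
  intro n _
  have hd1 : (d : ℝ) ≠ 1 := by exact_mod_cast (by omega : d ≠ 1)
  have hiter := M.htRF_RFiter_le φ n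
  rw [hdeg, geom_sum_eq hd1] at hiter
  have hlog8 : 0 ≤ (d : ℝ) ^ 2 * (((d : ℝ) ^ (n - 1) - 1) / ((d : ℝ) - 1)) * Real.log 8 := by
    rw [← geom_sum_eq hd1]
    positivity
  linarith

end
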